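/- Let Ṽ_1 be the normalised Wolbachia operator with η = 1. The set T = {(x₁,x₂,x₃,u) ∈ S^{3,1} : x₂ > 0} is the largest subset of S^{3,1} that is invariant under Ṽ_1; that is, Ṽ_1(T) ⊆ T, and every subset U ⊆ S^{3,1} with Ṽ_1(U) ⊆ U satisfies U ⊆ T. In particular, if s ∈ S^{3,1} has second coordinate x₂ = 0, then Ṽ_1(s) ∉ S^{3,1}. -/

import Mathlib

/-! For `η = 1` both the second and the last coordinate of `Ṽ₁ p` equal `x₂ / (2α)`. Since `S^{3,1}`
requires `u > 0`, a point of `S^{3,1}` is mapped back into `S^{3,1}` exactly when `x₂ > 0`, and then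
its image again has `x₂ > 0`. -/

/-- The normalised Wolbachia gonosomal operator with parameter `η`
(defined for points whose first three coordinates have positive sum). -/
noncomputable def nWolbOp (η : ℝ) (p : ℝ × ℝ × ℝ × ℝ) : ℝ × ℝ × ℝ × ℝ :=
  (η * (2 * p.1 + p.2.2.1) / (2 * (p.1 + p.2.1 + p.2.2.1)),
   (p.2.1 + (1 - η) * p.2.2.1) / (2 * (p.1 + p.2.1 + p.2.2.1)),
   η * p.2.2.1 / (2 * (p.1 + p.2.1 + p.2.2.1)),
   ((1 - η) * (2 * p.1 + p.2.2.1) + p.2.1) / (2 * (p.1 + p.2.1 + p.2.2.1)))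

/-- The set `S^{3,1}` of frequency distributions. -/
def S31 : Set (ℝ × ℝ × ℝ × ℝ) :=
  {p | 0 ≤ p.1 ∧ 0 ≤ p.2.1 ∧ 0 ≤ p.2.2.1 ∧ 0 ≤ p.2.2.2 ∧
       0 < p.1 + p.2.1 + p.2.2.1 ∧ 0 < p.2.2.2 ∧
       p.1 + p.2.1 + p.2.2.1 + p.2.2.2 = 1}

theorem nWolbOp_one_apply (x y z u : ℝ) :
    nWolbOp 1 (x, y, z, u) =
      ((2 * x + z) / (2 * (x + y + z)), y / (2 * (x + y + z)),
        z / (2 * (x + y + z)), y / (2 * (x + y + z))) := by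
  simp only [nWolbOp, one_mul, sub_self, zero_mul, add_zero, zero_add]

theorem nWolbOp_one_mem_S31 {p : ℝ × ℝ × ℝ × ℝ} (hp : p ∈ S31) (hy : 0 < p.2.1) :
    nWolbOp 1 p ∈ S31 := by
  obtain ⟨x, y, z, u⟩ := p
  obtain ⟨hx, -, hz, -, hα, -, -⟩ := hp
  have h2α : 0 < 2 * (x + y + z) := by linarith
  rw [nWolbOp_one_apply]
  refine ⟨by positivity, by positivity, by positivity, by positivity, ?_, by positivity, ?_⟩
  · rw [← add_div, ← add_div]
    exact div_pos (by linarith) h2α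
  · field_simp
    ring

theorem nWolbOp_one_not_mem_S31 {p : ℝ × ℝ × ℝ × ℝ} (hy : p.2.1 = 0) :
    nWolbOp 1 p ∉ S31 := by
  obtain ⟨x, y, z, u⟩ := p
  rintro ⟨-, -, -, -, -, hu, -⟩
  simp only at hy
  simp [nWolbOp_one_apply, hy] at hu

theorem nWolbOp_one_mem_S31_iff {p : ℝ × ℝ × ℝ × ℝ} (hp : p ∈ S31) :
    nWolbOp 1 p ∈ S31 ↔ 0 < p.2.1 :=
  ⟨fun himg => hp.2.1.lt_of_ne fun hy => nWolbOp_one_not_mem_S31 hy.symm himg,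
    nWolbOp_one_mem_S31 hp⟩

theorem nWolbOp_one_snd_pos {p : ℝ × ℝ × ℝ × ℝ} (hp : p ∈ S31) (hy : 0 < p.2.1) :
    0 < (nWolbOp 1 p).2.1 := by
  obtain ⟨x, y, z, u⟩ := p
  have hα : 0 < x + y + z := hp.2.2.2.2.1
  rw [nWolbOp_one_apply]
  exact div_pos hy (by positivity)

theorem nWolbOp_one_largest_invariant :
    (∀ p ∈ {q ∈ S31 | 0 < q.2.1}, nWolbOp 1 p ∈ {q ∈ S31 | 0 < q.2.1}) ∧
    (∀ U ⊆ S31, (∀ p ∈ U, nWolbOp 1 p ∈ U) → U ⊆ {q ∈ S31 | 0 < q.2.1}) ∧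
    (∀ s ∈ S31, s.2.1 = 0 → nWolbOp 1 s ∉ S31) := by
  refine ⟨fun p ⟨hp, hy⟩ => ⟨nWolbOp_one_mem_S31 hp hy, nWolbOp_one_snd_pos hp hy⟩,
    fun U hU hinv p hpU => ?_, fun s _ hy => nWolbOp_one_not_mem_S31 hy⟩
  exact ⟨hU hpU, (nWolbOp_one_mem_S31_iff (hU hpU)).1 (hU (hinv p hpU))⟩
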